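/- arXiv:2505.15464 — 4 statements merged into one kernel-verified Lean document; each statement's English description precedes it below -/
import Mathlib

section
/- Assume the edge coefficients are symmetric (β_{st} = β_{ts} for all s, t) and F_s(0_s) = 0 for every s ∈ V. Let h : Π_s X_s → (0, ∞) be measurable and suppose that for every s ∈ V and every x ∈ Π_s X_s, 0 < ∫ h(x^{s←u}) dμ_s(u) < ∞, 0 < ∫ q_s(x^{s←u}) dμ_s(u) < ∞, and h(x) · ∫ q_s(x^{s←u}) dμ_s(u) = q_s(x) · ∫ h(x^{s←u}) dμ_s(u) (i.e., every node-conditional density of h equals the specified normalized node-conditional kernel). Then for all x ∈ Π_s X_s, h(x) = h(𝟘) · exp( Σ_{s∈V} (f_s(x_s) − f_s(0_s)) + (1/2) Σ_{s∈V} Σ_{t≠s} β_{ts} F_t(x_t) F_s(x_s) ). That is, any positive function capable of generating the node-conditional densities has the pairwise joint form, up to the multiplicative constant h(𝟘) (uniqueness direction of Proposition 2.1). -/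
open MeasureTheory Finset

/-- Uniqueness direction of Proposition 2.1: any positive function `h` whose node-conditional
densities equal the specified normalized node-conditional kernels has the pairwise joint form,
up to the multiplicative constant `h 𝟘`. -/
theorem stmt_2 {p : ℕ} {X : Fin p → Type*} [∀ s, MeasurableSpace (X s)]
    (μ : ∀ s, Measure (X s)) [∀ s, SigmaFinite (μ s)]
    (z : ∀ s, X s)
    (f F : ∀ s, X s → ℝ)
    (hf : ∀ s, Measurable (f s)) (hF : ∀ s, Measurable (F s))
    (β : Fin p → Fin p → ℝ)
    (hsym : ∀ s t, β s t = β t s)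
    (hF0 : ∀ s, F s (z s) = 0)
    (h : ((t : Fin p) → X t) → ℝ)
    (hmeas : Measurable h) (hpos : ∀ x, 0 < h x)
    (q : (s : Fin p) → ((t : Fin p) → X t) → ℝ)
    (hq : ∀ s x, q s x = Real.exp (f s (x s)
        + ∑ t ∈ univ \ {s}, β t s * F t (x t) * F s (x s)))
    (hInt_h : ∀ (s : Fin p) (x : (t : Fin p) → X t),
      Integrable (fun u => h (Function.update x s u)) (μ s))
    (hpos_h : ∀ (s : Fin p) (x : (t : Fin p) → X t),
      0 < ∫ u, h (Function.update x s u) ∂μ s)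
    (hInt_q : ∀ (s : Fin p) (x : (t : Fin p) → X t),
      Integrable (fun u => q s (Function.update x s u)) (μ s))
    (hpos_q : ∀ (s : Fin p) (x : (t : Fin p) → X t),
      0 < ∫ u, q s (Function.update x s u) ∂μ s)
    (hcond : ∀ (s : Fin p) (x : (t : Fin p) → X t),
      h x * ∫ u, q s (Function.update x s u) ∂μ s
        = q s x * ∫ u, h (Function.update x s u) ∂μ s) :
    ∀ x : (t : Fin p) → X t,
      h x = h z * Real.exp (∑ u, (f u (x u) - f u (z u))
        + (1 / 2) * ∑ u, ∑ t ∈ univ \ {u}, β t u * F t (x t) * F u (x u)) := by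
  -- Key swap lemma: replacing the s-coordinate by the base point.
  have key : ∀ (s : Fin p) (x : (t : Fin p) → X t),
      h x * q s (Function.update x s (z s)) = q s x * h (Function.update x s (z s)) := by
    intro s x
    set x' := Function.update x s (z s) with hx'
    have hupd : ∀ u : X s, Function.update x' s u = Function.update x s u := by
      intro u; rw [hx', Function.update_idem]
    have e1 := hcond s x
    have e2 := hcond s x'
    simp only [hupd] at e2
    have hQpos := hpos_q s x
    apply mul_right_cancel₀ (ne_of_gt hQpos)
    calc (h x * q s x') * (∫ u, q s (Function.update x s u) ∂μ s)
        = (h x * (∫ u, q s (Function.update x s u) ∂μ s)) * q s x' := by ring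
      _ = (q s x * (∫ u, h (Function.update x s u) ∂μ s)) * q s x' := by rw [e1]
      _ = q s x * (q s x' * (∫ u, h (Function.update x s u) ∂μ s)) := by ring
      _ = q s x * (h x' * (∫ u, q s (Function.update x s u) ∂μ s)) := by rw [← e2]
      _ = (q s x * h x') * (∫ u, q s (Function.update x s u) ∂μ s) := by ring
  intro x
  -- Interpolating points
  set Y : ℕ → (t : Fin p) → X t := fun n t => if (t : ℕ) < n then z t else x t with hYdef
  set g : Fin p → Fin p → ℝ := fun k t => β t k * F t (x t) * F k (x k) with hgdef
  set D : Fin p → ℝ :=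
    fun k => f k (x k) - f k (z k) + ∑ t, if k < t then g k t else 0 with hDdef
  have gsymm : ∀ k t : Fin p, g k t = g t k := by
    intro k t; simp only [hgdef]; rw [hsym k t]; ring
  have hY0 : Y 0 = x := by funext t; simp [hYdef]
  have hYp : Y p = z := by funext t; simp [hYdef, t.isLt]
  have hstepY : ∀ (n : ℕ) (hn : n < p),
      Y (n + 1) = Function.update (Y n) ⟨n, hn⟩ (z ⟨n, hn⟩) := by
    intro n hn; funext t
    rcases eq_or_ne t ⟨n, hn⟩ with rfl | ht
    · simp [hYdef]
    · have htn : (t : ℕ) ≠ n := fun hc => ht (Fin.ext hc)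
      rw [Function.update_of_ne ht]
      simp only [hYdef]
      have : (t : ℕ) < n + 1 ↔ (t : ℕ) < n := by
        rw [Nat.lt_succ_iff_lt_or_eq]
        exact or_iff_left htn
      simp only [this]
  -- main induction
  have main : ∀ n, n ≤ p →
      h x = h (Y n) * Real.exp (∑ k ∈ univ.filter (fun k : Fin p => (k : ℕ) < n), D k) := by
    intro n
    induction n with
    | zero =>
      intro _
      have : univ.filter (fun k : Fin p => (k : ℕ) < 0) = ∅ := by
        apply Finset.filter_false_of_mem; intro k _; omega
      rw [hY0, this]; simp
    | succ n ih =>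
      intro hn1
      have hn : n < p := lt_of_lt_of_le (Nat.lt_succ_self n) hn1
      set s : Fin p := ⟨n, hn⟩ with hs
      have hsval : (s : ℕ) = n := rfl
      have hupdY : Function.update (Y n) s (z s) = Y (n + 1) := (hstepY n hn).symm
      have hk := key s (Y n)
      rw [hupdY] at hk
      have hYns : Y n s = x s := by simp [hYdef, hs]
      have hYn1s : Y (n + 1) s = z s := by simp [hYdef, hs]
      -- value of q s at Y n
      have hq1 : q s (Y n) = Real.exp (f s (x s) + ∑ t, if s < t then g s t else 0) := by
        rw [hq, hYns]
        congr 2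
        have hsum : (∑ t, if s < t then g s t else 0)
            = ∑ t ∈ univ \ {s}, (if s < t then g s t else 0) + (if s < s then g s s else 0) :=
          Finset.sum_eq_sum_sdiff_singleton_add (Finset.mem_univ s) _
        rw [hsum]
        simp only [lt_irrefl, if_false, add_zero]
        refine Finset.sum_congr rfl fun t htmem => ?_
        have hts : t ≠ s := by
          simp only [Finset.mem_sdiff, Finset.mem_singleton] at htmem; exact htmem.2
        by_cases hlt : s < t
        · have : ¬ (t : ℕ) < n := by
            have := Fin.lt_def.mp hlt; omega
          rw [if_pos hlt]
          simp only [hYdef, hgdef, if_neg this, hYns]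
        · have : (t : ℕ) < n := by
            have h1 : t < s := lt_of_le_of_ne (not_lt.mp hlt) hts
            have := Fin.lt_def.mp h1; omega
          rw [if_neg hlt]
          simp only [hYdef, if_pos this, hF0, zero_mul, mul_zero]
      have hq2 : q s (Y (n + 1)) = Real.exp (f s (z s)) := by
        rw [hq, hYn1s]
        congr 1
        rw [hF0]
        simp
      have hqpos2 : 0 < q s (Y (n + 1)) := by rw [hq2]; exact Real.exp_pos _
      have hstep : h (Y n) = h (Y (n + 1)) * Real.exp (D s) := by
        apply mul_right_cancel₀ (ne_of_gt hqpos2)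
        rw [hk, hq1]
        conv_rhs => rw [hq2]
        rw [mul_assoc, ← Real.exp_add]
        have hexp : D s + f s (z s) = f s (x s) + ∑ t, if s < t then g s t else 0 := by
          simp only [hDdef]; ring
        rw [← hexp]
        ring
      have hfilter : univ.filter (fun k : Fin p => (k : ℕ) < n + 1)
          = insert s (univ.filter (fun k : Fin p => (k : ℕ) < n)) := by
        ext k
        simp only [Finset.mem_filter, Finset.mem_univ, true_and, Finset.mem_insert,
          Fin.ext_iff, hs, Nat.lt_succ_iff_lt_or_eq]
        omega
      have hsnot : s ∉ univ.filter (fun k : Fin p => (k : ℕ) < n) := by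
        simp [hs]
      rw [hfilter, Finset.sum_insert hsnot, ih (Nat.le_of_succ_le hn1), hstep,
        Real.exp_add, mul_assoc, ← Real.exp_add, ← Real.exp_add]
  have final := main p le_rfl
  have hfilterp : univ.filter (fun k : Fin p => (k : ℕ) < p) = univ := by
    apply Finset.filter_true_of_mem; intro k _; exact k.isLt
  rw [hfilterp, hYp] at final
  rw [final]
  congr 2
  -- exponent identity
  rw [hDdef]
  rw [Finset.sum_add_distrib]
  have split : ∀ k : Fin p, ∑ t ∈ univ \ {k}, g k t
      = (∑ t, if k < t then g k t else 0) + (∑ t, if t < k then g k t else 0) := by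
    intro k
    rw [← Finset.sum_add_distrib]
    have hsum : (∑ t, ((if k < t then g k t else 0) + (if t < k then g k t else 0)))
        = ∑ t ∈ univ \ {k}, ((if k < t then g k t else 0) + (if t < k then g k t else 0))
          + ((if k < k then g k k else 0) + (if k < k then g k k else 0)) :=
      Finset.sum_eq_sum_sdiff_singleton_add (Finset.mem_univ k) _
    rw [hsum]
    simp only [lt_irrefl, if_false, add_zero]
    symm
    refine Finset.sum_congr rfl fun t htmem => ?_
    have hts : t ≠ k := by
      simp only [Finset.mem_sdiff, Finset.mem_singleton] at htmem; exact htmem.2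
    rcases lt_or_gt_of_ne hts with hlt | hgt
    · rw [if_neg (asymm hlt), if_pos hlt, zero_add]
    · rw [if_pos hgt, if_neg (asymm hgt), add_zero]
  have C_eq : (∑ k : Fin p, ∑ t : Fin p, if t < k then g k t else 0)
      = ∑ k : Fin p, ∑ t : Fin p, if k < t then g k t else 0 := by
    rw [Finset.sum_comm]
    refine Finset.sum_congr rfl fun a _ => Finset.sum_congr rfl fun b _ => ?_
    by_cases hab : a < b
    · rw [if_pos hab, if_pos hab, gsymm b a]
    · rw [if_neg hab, if_neg hab]
  have htotal : (∑ u : Fin p, ∑ t ∈ univ \ {u}, β t u * F t (x t) * F u (x u))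
      = 2 * ∑ k : Fin p, ∑ t : Fin p, if k < t then g k t else 0 := by
    have : (∑ u : Fin p, ∑ t ∈ univ \ {u}, β t u * F t (x t) * F u (x u))
        = ∑ u : Fin p, ∑ t ∈ univ \ {u}, g u t := by
      refine Finset.sum_congr rfl fun u _ => Finset.sum_congr rfl fun t _ => ?_
      simp [hgdef]
    rw [this]
    calc (∑ u : Fin p, ∑ t ∈ univ \ {u}, g u t)
        = ∑ u : Fin p, ((∑ t, if u < t then g u t else 0) + (∑ t, if t < u then g u t else 0)) :=
          Finset.sum_congr rfl fun u _ => split u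
      _ = (∑ u : Fin p, ∑ t, if u < t then g u t else 0)
          + (∑ u : Fin p, ∑ t, if t < u then g u t else 0) := Finset.sum_add_distrib
      _ = 2 * ∑ k : Fin p, ∑ t : Fin p, if k < t then g k t else 0 := by rw [C_eq]; ring
  rw [htotal]
  ring
end

section
/- Assume the edge coefficients are symmetric (β_{st} = β_{ts} for all s, t) and F_s(0_s) = 0 for every s ∈ V. Let h : Π_s X_s → (0, ∞) satisfy, for every s ∈ V and every x ∈ Π_s X_s, the one-coordinate ratio identity h(x) = h(x^{s←0_s}) · exp( f_s(x_s) − f_s(0_s) + Σ_{t≠s} β_{ts} F_t(x_t) F_s(x_s) ). Then for all x ∈ Π_s X_s, h(x) = h(𝟘) · exp( Σ_{s∈V} (f_s(x_s) − f_s(0_s)) + (1/2) Σ_{s∈V} Σ_{t≠s} β_{ts} F_t(x_t) F_s(x_s) ). -/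
/-!
Both `h` and `x ↦ exp Φ(x)`, where `Φ` is the exponent on the right-hand side, obey the same
one-coordinate ratio identity: resetting `x_s` to `0_s` kills every pair term containing `s`
(as `F_s(0_s) = 0`), and by symmetry of `β` each such pair appears twice in the double sum,
which the factor `1/2` compensates. Hence `h · exp(-Φ)` is unchanged by resetting any single
coordinate to its base point, and resetting the coordinates one by one shows it is constant.
-/

open Finset

theorem apply_eq_of_apply_update_eq {ι α : Type*} [Fintype ι] [DecidableEq ι] {X : ι → Type*}
    (z : ∀ i, X i) {q : (∀ i, X i) → α} (hq : ∀ s x, q (Function.update x s (z s)) = q x)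
    (x : ∀ i, X i) : q x = q z := by
  suffices ∀ S : Finset ι, ∀ x, (∀ i ∉ S, x i = z i) → q x = q z from this univ x (by simp)
  intro S
  induction S using Finset.induction_on with
  | empty => exact fun x hx => congrArg q (funext fun i => hx i (notMem_empty i))
  | insert s S _ ih =>
    intro x hx
    rw [← hq s x]
    refine ih _ fun i hi => ?_
    by_cases his : i = s
    · subst his; simp
    · rw [Function.update_of_ne his]
      exact hx i (by simp [his, hi])

theorem eq_mul_exp_sub_of_update {ι : Type*} [Fintype ι] [DecidableEq ι] {X : ι → Type*}
    (z : ∀ i, X i) {h Φ : (∀ i, X i) → ℝ}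
    (hh : ∀ s x, h x = h (Function.update x s (z s)) *
      Real.exp (Φ x - Φ (Function.update x s (z s))))
    (x : ∀ i, X i) : h x = h z * Real.exp (Φ x - Φ z) := by
  have hconst := apply_eq_of_apply_update_eq (q := fun x => h x * Real.exp (-Φ x)) z
    (fun s x => by rw [hh s x, mul_assoc, ← Real.exp_add]; ring_nf) x
  calc h x = h x * Real.exp (-Φ x) * Real.exp (Φ x) := by
        rw [mul_assoc, ← Real.exp_add, neg_add_cancel, Real.exp_zero, mul_one]
    _ = h z * Real.exp (Φ x - Φ z) := by
        rw [hconst, mul_assoc, ← Real.exp_add, neg_add_eq_sub]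

theorem Finset.sum_sub_sum_update {ι M : Type*} [Fintype ι] [DecidableEq ι] [AddCommGroup M]
    (g : ι → M) (s : ι) (b : M) : ∑ i, g i - ∑ i, Function.update g s b i = g s - b := by
  rw [sum_update_of_mem (mem_univ s), sum_eq_add_sum_sdiff_singleton_of_mem (mem_univ s)]
  abel

section PairEnergy

variable {ι : Type*} [Fintype ι] [DecidableEq ι]

def pairEnergy (β : ι → ι → ℝ) (v : ι → ℝ) : ℝ :=
  ∑ u, ∑ t ∈ univ \ {u}, β t u * v t * v u

theorem pairEnergy_sub_pairEnergy_update_zero {β : ι → ι → ℝ} (hβ : ∀ s t, β s t = β t s)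
    (v : ι → ℝ) (s : ι) :
    pairEnergy β v - pairEnergy β (Function.update v s 0) =
      2 * ∑ t ∈ univ \ {s}, β t s * v t * v s := by
  have hterm : ∀ t u, t ≠ u →
      β t u * v t * v u - β t u * Function.update v s 0 t * Function.update v s 0 u =
        (if u = s then β t s * v t * v s else 0) + (if t = s then β s u * v s * v u else 0) := by
    intro t u htu
    by_cases hu : u = s <;> by_cases ht : t = s <;> simp_all
  calc pairEnergy β v - pairEnergy β (Function.update v s 0)
      = ∑ u, ∑ t ∈ univ \ {u}, ((if u = s then β t s * v t * v s else 0)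
          + (if t = s then β s u * v s * v u else 0)) := by
        simp only [pairEnergy, ← sum_sub_distrib]
        exact sum_congr rfl fun u _ => sum_congr rfl fun t ht => hterm t u (by simpa using ht)
    _ = ∑ t ∈ univ \ {s}, β t s * v t * v s + ∑ u ∈ univ \ {s}, β s u * v s * v u := by
        simp only [sum_add_distrib, sum_ite_irrel, sum_const_zero, sum_ite_eq', mem_univ,
          if_true, ← sum_filter]
        congr 2
        ext u
        simp [eq_comm]
    _ = 2 * ∑ t ∈ univ \ {s}, β t s * v t * v s := by
        rw [two_mul]
        congr 1
        exact sum_congr rfl fun u _ => by rw [hβ]; ring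

end PairEnergy

theorem stmt_3_general {p : ℕ} {X : Fin p → Type*}
    (z : ∀ s, X s)
    (f F : ∀ s, X s → ℝ)
    (β : Fin p → Fin p → ℝ)
    (hsym : ∀ s t, β s t = β t s)
    (hF0 : ∀ s, F s (z s) = 0)
    (h : ((t : Fin p) → X t) → ℝ)
    (hratio : ∀ (s : Fin p) (x : (t : Fin p) → X t),
      h x = h (Function.update x s (z s)) *
        Real.exp (f s (x s) - f s (z s)
          + ∑ t ∈ univ \ {s}, β t s * F t (x t) * F s (x s))) :
    ∀ x : (t : Fin p) → X t,
      h x = h z * Real.exp (∑ u, (f u (x u) - f u (z u))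
        + (1 / 2) * ∑ u, ∑ t ∈ univ \ {u}, β t u * F t (x t) * F u (x u)) := by
  set Φ : (∀ t, X t) → ℝ := fun x =>
    ∑ u, (f u (x u) - f u (z u)) + (1 / 2) * pairEnergy β (fun t => F t (x t)) with hΦ
  have hΦ_update : ∀ s x, Φ x - Φ (Function.update x s (z s)) =
      f s (x s) - f s (z s) + ∑ t ∈ univ \ {s}, β t s * F t (x t) * F s (x s) := by
    intro s x
    have hf := Function.apply_update (fun u w => f u w - f u (z u)) x s (z s)
    have hF := Function.apply_update F x s (z s)
    simp only [sub_self, hF0] at hf hF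
    simp only [hΦ, hf, hF]
    linear_combination sum_sub_sum_update (fun u => f u (x u) - f u (z u)) s 0 +
      (1 / 2) * pairEnergy_sub_pairEnergy_update_zero hsym (fun t => F t (x t)) s
  have hΦz : Φ z = 0 := by simp [hΦ, pairEnergy, hF0]
  intro x
  show h x = h z * Real.exp (Φ x)
  have hx := eq_mul_exp_sub_of_update (h := h) (Φ := Φ) z
    (fun s x => by rw [hΦ_update]; exact hratio s x) x
  rwa [hΦz, sub_zero] at hx

/-- Brook-type iteration: if a positive function `h` satisfies the one-coordinate ratio
identity at every node, with symmetric edge coefficients and `F s (0_s) = 0`, then `h`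
has the pairwise joint form up to the constant `h 𝟘`. -/
theorem stmt_3 {p : ℕ} {X : Fin p → Type*}
    (z : ∀ s, X s)
    (f F : ∀ s, X s → ℝ)
    (β : Fin p → Fin p → ℝ)
    (hsym : ∀ s t, β s t = β t s)
    (hF0 : ∀ s, F s (z s) = 0)
    (h : ((t : Fin p) → X t) → ℝ)
    (hpos : ∀ x, 0 < h x)
    (hratio : ∀ (s : Fin p) (x : (t : Fin p) → X t),
      h x = h (Function.update x s (z s)) *
        Real.exp (f s (x s) - f s (z s)
          + ∑ t ∈ univ \ {s}, β t s * F t (x t) * F s (x s))) :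
    ∀ x : (t : Fin p) → X t,
      h x = h z * Real.exp (∑ u, (f u (x u) - f u (z u))
        + (1 / 2) * ∑ u, ∑ t ∈ univ \ {u}, β t u * F t (x t) * F u (x u)) :=
  stmt_3_general z f F β hsym hF0 h hratio
end

section
/- Let g : Π_s X_s → (0, ∞), and suppose that F_s(0_s) = 0 for every s ∈ V and that for each s ∈ V there exists a function A_s : Π_s X_s → ℝ satisfying A_s(x^{s←u}) = A_s(x) for all x and all u ∈ X_s (i.e., A_s does not depend on the s-th coordinate), such that log g(x) = f_s(x_s) + Σ_{t≠s} β_{ts} F_t(x_t) F_s(x_s) + A_s(x) for all x. Then for all s ≠ t and all x ∈ Π_s X_s, β_{ts} F_t(x_t) F_s(x_s) = β_{st} F_s(x_s) F_t(x_t). In particular, if there exist a ∈ X_s and b ∈ X_t with F_s(a) ≠ 0 and F_t(b) ≠ 0, then β_{st} = β_{ts}; that is, compatibility of the node-conditional specifications forces the edge coefficients to be symmetric. -/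
open Finset

/-- Compatibility of the node-conditional specifications forces symmetry of the edge
coefficients: if `log g` admits, for each node `s`, a decomposition into the node-`s`
kernel exponent plus a term not depending on the `s`-th coordinate, then the interaction
terms are symmetric, and `β s t = β t s` whenever `F s` and `F t` are not identically zero. -/
theorem stmt_4 {p : ℕ} {X : Fin p → Type*}
    (z : ∀ s, X s)
    (f F : ∀ s, X s → ℝ)
    (β : Fin p → Fin p → ℝ)
    (hF0 : ∀ s, F s (z s) = 0)
    (g : ((t : Fin p) → X t) → ℝ)
    (hgpos : ∀ x, 0 < g x)
    (A : (s : Fin p) → ((t : Fin p) → X t) → ℝ)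
    (hA : ∀ (s : Fin p) (x : (t : Fin p) → X t) (u : X s),
      A s (Function.update x s u) = A s x)
    (hlog : ∀ (s : Fin p) (x : (t : Fin p) → X t),
      Real.log (g x) = f s (x s)
        + ∑ t ∈ univ \ {s}, β t s * F t (x t) * F s (x s) + A s x) :
    (∀ s t : Fin p, s ≠ t → ∀ x : (v : Fin p) → X v,
        β t s * F t (x t) * F s (x s) = β s t * F s (x s) * F t (x t))
    ∧ (∀ s t : Fin p, s ≠ t → ∀ (a : X s) (b : X t),
        F s a ≠ 0 → F t b ≠ 0 → β s t = β t s) := by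
  have key : ∀ s t : Fin p, s ≠ t → ∀ x : (v : Fin p) → X v,
      Real.log (g x) - Real.log (g (Function.update x s (z s)))
      - Real.log (g (Function.update x t (z t)))
      + Real.log (g (Function.update (Function.update x s (z s)) t (z t)))
      = β t s * F t (x t) * F s (x s) := by
    intro s t hst x
    rw [hlog s x, hlog s (Function.update x s (z s)),
      hlog s (Function.update x t (z t)),
      hlog s (Function.update (Function.update x s (z s)) t (z t))]
    have hcomm : Function.update (Function.update x s (z s)) t (z t)
        = Function.update (Function.update x t (z t)) s (z s) :=
      Function.update_comm hst _ _ _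
    rw [hcomm, hA s x (z s), hA s (Function.update x t (z t)) (z s)]
    have hss : Function.update x s (z s) s = z s := Function.update_self _ _ _
    have hts : Function.update x t (z t) s = x s := Function.update_of_ne hst _ _
    have hcs : Function.update (Function.update x t (z t)) s (z s) s = z s :=
      Function.update_self _ _ _
    rw [hss, hts, hcs, hF0 s]
    simp only [mul_zero, Finset.sum_const_zero]
    have hsum : ∑ u ∈ univ \ {s}, β u s * F u (x u) * F s (x s)
        - ∑ u ∈ univ \ {s}, β u s * F u (Function.update x t (z t) u) * F s (x s)
        = β t s * F t (x t) * F s (x s) := by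
      rw [← Finset.sum_sub_distrib]
      rw [Finset.sum_eq_single t]
      · rw [Function.update_self, hF0 t]; ring
      · intro u hu hut
        rw [Function.update_of_ne hut]; ring
      · intro h
        exact absurd (Finset.mem_sdiff.mpr ⟨Finset.mem_univ t,
          by simp [hst.symm]⟩) h
    linarith [hsum]
  have main : ∀ s t : Fin p, s ≠ t → ∀ x : (v : Fin p) → X v,
      β t s * F t (x t) * F s (x s) = β s t * F s (x s) * F t (x t) := by
    intro s t hst x
    have h1 := key s t hst x
    have h2 := key t s hst.symm x
    rw [Function.update_comm hst.symm (z t) (z s) x] at h2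
    linarith
  refine ⟨main, fun s t hst a b ha hb => ?_⟩
  have := main s t hst (Function.update (Function.update z s a) t b)
  rw [Function.update_self, Function.update_of_ne hst, Function.update_self] at this
  have h0 : (β s t - β t s) * (F t b * F s a) = 0 := by linear_combination -this
  rcases mul_eq_zero.mp h0 with h | h
  · exact sub_eq_zero.mp h
  · exact absurd h (mul_ne_zero hb ha)
end

section
/- For s ∈ V define the neighborhood N(s) = { t ∈ V : t ≠ s and (β_{ts} ≠ 0 or β_{st} ≠ 0) }. Let x, x' ∈ Π_s X_s agree at coordinate s and at every coordinate t ∈ N(s), and suppose ∫ g(x^{s←u}) dμ_s(u) and ∫ g(x'^{s←u}) dμ_s(u) are both finite. Then g(x) · ∫ g(x'^{s←u}) dμ_s(u) = g(x') · ∫ g(x^{s←u}) dμ_s(u). That is, the node-s conditional density under the pairwise joint form depends on the other coordinates only through the neighbors of s (local Markov property). -/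
open MeasureTheory Finset

/-- Local Markov property: the node-`s` conditional density under the pairwise joint form
depends on the other coordinates only through the neighbors of `s`, where `t ≠ s` is a
neighbor of `s` when `β t s ≠ 0` or `β s t ≠ 0`. -/
theorem stmt_7 {p : ℕ} {X : Fin p → Type*} [∀ s, MeasurableSpace (X s)]
    (μ : ∀ s, Measure (X s)) [∀ s, SigmaFinite (μ s)]
    (f F : ∀ s, X s → ℝ)
    (hf : ∀ s, Measurable (f s)) (hF : ∀ s, Measurable (F s))
    (β : Fin p → Fin p → ℝ)
    (g : ((t : Fin p) → X t) → ℝ)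
    (hg : ∀ x, g x = Real.exp (∑ u, f u (x u)
        + (1 / 2) * ∑ u, ∑ t ∈ univ \ {u}, β t u * F t (x t) * F u (x u)))
    (s : Fin p) (x x' : (t : Fin p) → X t)
    (hxs : x s = x' s)
    (hnbr : ∀ t : Fin p, t ≠ s → (β t s ≠ 0 ∨ β s t ≠ 0) → x t = x' t)
    (hInt : Integrable (fun u => g (Function.update x s u)) (μ s))
    (hInt' : Integrable (fun u => g (Function.update x' s u)) (μ s)) :
    g x * ∫ u, g (Function.update x' s u) ∂μ s
      = g x' * ∫ u, g (Function.update x s u) ∂μ s := by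
  classical
  set C : ((t : Fin p) → X t) → ℝ := fun y =>
    ∑ t ∈ univ \ {s}, f t (y t)
      + (1/2) * ∑ v ∈ univ \ {s}, ∑ t ∈ (univ \ {v}) \ {s}, β t v * F t (y t) * F v (y v)
    with hC
  set h : X s → ℝ := fun u =>
    f s u + (1/2) * ∑ t ∈ univ \ {s}, (β t s + β s t) * (F t (x t) * F s u) with hh
  have hkey : ∀ (y : (t : Fin p) → X t),
      (∀ t, t ≠ s → (β t s ≠ 0 ∨ β s t ≠ 0) → y t = x t) →
      ∀ u, g (Function.update y s u) = Real.exp (C y) * Real.exp (h u) := by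
    intro y hy u
    rw [hg, ← Real.exp_add]
    congr 1
    have hupd : ∀ t, t ≠ s → Function.update y s u t = y t := by
      intro t ht; exact Function.update_of_ne ht _ _
    have h1 : ∑ v, f v (Function.update y s u v)
        = ∑ v ∈ univ \ {s}, f v (y v) + f s u := by
      rw [Finset.sum_eq_sum_sdiff_singleton_add (mem_univ s)]
      congr 1
      · refine Finset.sum_congr rfl fun t ht => ?_
        have hts : t ≠ s := by simpa using (mem_sdiff.mp ht).2
        rw [hupd t hts]
      · rw [Function.update_self]
    have h2 : (∑ v, ∑ t ∈ univ \ {v},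
          β t v * F t (Function.update y s u t) * F v (Function.update y s u v))
        = (∑ v ∈ univ \ {s}, ∑ t ∈ (univ \ {v}) \ {s}, β t v * F t (y t) * F v (y v))
          + ((∑ t ∈ univ \ {s}, β t s * (F t (x t) * F s u))
            + ∑ v ∈ univ \ {s}, β s v * (F v (x v) * F s u)) := by
      rw [Finset.sum_eq_sum_sdiff_singleton_add (mem_univ s)]
      have hvs : ∑ t ∈ univ \ {s},
            β t s * F t (Function.update y s u t) * F s (Function.update y s u s)
          = ∑ t ∈ univ \ {s}, β t s * (F t (x t) * F s u) := by
        rw [Function.update_self]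
        refine Finset.sum_congr rfl fun t ht => ?_
        have hts : t ≠ s := by simpa using (mem_sdiff.mp ht).2
        rw [hupd t hts]
        by_cases hb : β t s = 0
        · simp [hb]
        · rw [hy t hts (Or.inl hb)]; ring
      rw [hvs]
      have hrest : ∑ v ∈ univ \ {s}, ∑ t ∈ univ \ {v},
            β t v * F t (Function.update y s u t) * F v (Function.update y s u v)
          = ∑ v ∈ univ \ {s}, (∑ t ∈ (univ \ {v}) \ {s}, β t v * F t (y t) * F v (y v)
              + β s v * (F v (x v) * F s u)) := by
        refine Finset.sum_congr rfl fun v hv => ?_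
        have hvs' : v ≠ s := by simpa using (mem_sdiff.mp hv).2
        rw [Finset.sum_eq_sum_sdiff_singleton_add
          (show s ∈ univ \ {v} by simp [Ne.symm hvs'])]
        congr 1
        · refine Finset.sum_congr rfl fun t ht => ?_
          have hts : t ≠ s := by simpa using (mem_sdiff.mp ht).2
          rw [hupd t hts, hupd v hvs']
        · rw [Function.update_self, hupd v hvs']
          by_cases hb : β s v = 0
          · simp [hb]
          · rw [hy v hvs' (Or.inr hb)]; ring
      rw [hrest, Finset.sum_add_distrib]
      ring
    rw [h1, h2, hC, hh]
    have hsum : ∑ t ∈ univ \ {s}, (β t s + β s t) * (F t (x t) * F s u)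
        = ∑ t ∈ univ \ {s}, β t s * (F t (x t) * F s u)
          + ∑ t ∈ univ \ {s}, β s t * (F t (x t) * F s u) := by
      rw [← Finset.sum_add_distrib]
      exact Finset.sum_congr rfl fun t _ => by ring
    simp only
    rw [hsum]
    ring
  have hkx : ∀ u, g (Function.update x s u) = Real.exp (C x) * Real.exp (h u) :=
    hkey x (fun _ _ _ => rfl)
  have hkx' : ∀ u, g (Function.update x' s u) = Real.exp (C x') * Real.exp (h u) :=
    hkey x' (fun t ht hb => (hnbr t ht hb).symm)
  have hgx : g x = Real.exp (C x) * Real.exp (h (x s)) := by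
    have := hkx (x s); rwa [Function.update_eq_self] at this
  have hgx' : g x' = Real.exp (C x') * Real.exp (h (x s)) := by
    have := hkx' (x' s)
    rw [Function.update_eq_self] at this
    rw [this, hxs]
  have hI : ∫ u, g (Function.update x s u) ∂μ s
      = Real.exp (C x) * ∫ u, Real.exp (h u) ∂μ s := by
    simp_rw [hkx]; exact integral_const_mul _ _
  have hI' : ∫ u, g (Function.update x' s u) ∂μ s
      = Real.exp (C x') * ∫ u, Real.exp (h u) ∂μ s := by
    simp_rw [hkx']; exact integral_const_mul _ _
  rw [hgx, hgx', hI, hI']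
  ring
end
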